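/- A frame {f_j} of a separable Hilbert space H indexed by ℕ can be written as a linear combination f_j = λ u_j + μ v_j of two orthonormal bases {u_j}, {v_j} of H (with fixed scalars λ, μ) if and only if {f_j} is a Riesz basis of H. -/

import Mathlib

/-!
If `f j = λ u j + μ v j`, then `f j = N (u j)` for `N = λ + μ U`, where `U` is the unitary taking
`u` to `v`. Such an `N` is normal, and Parseval turns the lower frame bound into
`√C ‖x‖ ≤ ‖N† x‖ = ‖N x‖`; a normal operator that is bounded below is invertible, because its
range is closed and `(range N)ᗮ = ker N = 0`.

Conversely, an invertible `T` has the polar decomposition `T = U |T|` with `U` unitary, and the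
positive operator `|T|` equals `(‖|T|‖ / 2) (W + W⋆)` for the unitary `W = a + i √(1 - a²)`,
`a = |T| / ‖|T|‖`. So `T` maps an orthonormal basis `b` to `(‖|T|‖ / 2) (U W b j + U W⋆ b j)`.
-/

open scoped InnerProductSpace

lemma isStarNormal_smul_one_add_smul_of_mem_unitary {R A : Type*} [CommRing R] [StarRing R]
    [Ring A] [StarRing A] [Algebra R A] [StarModule R A] (c d : R) {u : A}
    (hu : u ∈ unitary A) : IsStarNormal (c • (1 : A) + d • u) :=
  have := isStarNormal_of_mem_unitary hu
  ((Commute.one_left _).smul_left c).isStarNormal_add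

section CStarAlgebra

variable {A : Type*} [CStarAlgebra A] [PartialOrder A] [StarOrderedRing A]

lemma IsSelfAdjoint.exists_mem_unitary_eq_smul_add_star {a : A} (ha : IsSelfAdjoint a) :
    ∃ w ∈ unitary A, a = (‖a‖ / 2) • (w + star w) := by
  let b : selfAdjoint A := ⟨NormedSpace.normalize a, (IsSelfAdjoint.all _).smul ha⟩
  have hb : ‖b‖ ≤ 1 := by
    rcases eq_or_ne a 0 with rfl | h
    · simp [b]
    · exact (NormedSpace.norm_normalize h).le
  refine ⟨_, (selfAdjoint.unitarySelfAddISMul b hb).2, ?_⟩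
  have hre := congrArg Subtype.val (selfAdjoint.realPart_unitarySelfAddISMul b hb)
  rw [realPart_apply_coe] at hre
  rw [div_eq_mul_inv, mul_smul, hre]
  exact (NormedSpace.norm_smul_normalize a).symm

lemma IsUnit.exists_mem_unitary_eq_mul_abs {x : A} (hx : IsUnit x) :
    ∃ u ∈ unitary A, x = u * CFC.abs x := by
  obtain ⟨a, ha⟩ : IsUnit (CFC.abs x) := (CFC.isUnit_sqrt_iff _).2 (hx.star.mul hx)
  have hsa : IsSelfAdjoint (CFC.abs x) := (CFC.abs_nonneg x).isSelfAdjoint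
  have hu : IsUnit (x * ↑a⁻¹) := hx.mul (Units.isUnit _)
  refine ⟨x * ↑a⁻¹, hu.mem_unitary_of_star_mul_self ?_, ?_⟩
  · have hstar : star ((a⁻¹ : Aˣ) : A) = ↑a⁻¹ := by
      rw [← Units.coe_star_inv, Units.ext (u := star a) (v := a)
        (by rw [Units.coe_star, ha, hsa.star_eq])]
    calc star (x * ↑a⁻¹) * (x * ↑a⁻¹) = star ((a⁻¹ : Aˣ) : A) * (star x * x) * ↑a⁻¹ := by
          simp only [star_mul, mul_assoc]
      _ = 1 := by rw [hstar, ← CFC.abs_mul_abs, ← ha]; simp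
  · rw [← ha, mul_assoc, Units.inv_mul, mul_one]

lemma IsUnit.exists_eq_smul_add_unitary {x : A} (hx : IsUnit x) :
    ∃ (r : ℝ) (u v : unitary A), x = r • ((u : A) + v) := by
  obtain ⟨u, hu, hxu⟩ := hx.exists_mem_unitary_eq_mul_abs
  obtain ⟨w, hw, habs⟩ := (CFC.abs_nonneg x).isSelfAdjoint.exists_mem_unitary_eq_smul_add_star
  refine ⟨‖CFC.abs x‖ / 2, ⟨u * w, mul_mem hu hw⟩,
    ⟨u * star w, mul_mem hu (Unitary.star_mem hw)⟩, ?_⟩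
  conv_lhs => rw [hxu, habs]
  rw [mul_smul_comm, mul_add]

end CStarAlgebra

namespace HilbertBasis

variable {ι 𝕜 E F : Type*} [RCLike 𝕜] [NormedAddCommGroup E] [InnerProductSpace 𝕜 E]
  [NormedAddCommGroup F] [InnerProductSpace 𝕜 F]

protected noncomputable def map (b : HilbertBasis ι 𝕜 E) (W : E ≃ₗᵢ[𝕜] F) : HilbertBasis ι 𝕜 F :=
  HilbertBasis.ofRepr (W.symm.trans b.repr)

@[simp]
lemma map_apply (b : HilbertBasis ι 𝕜 E) (W : E ≃ₗᵢ[𝕜] F) (i : ι) : b.map W i = W (b i) := by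
  classical
  rw [← HilbertBasis.repr_symm_single, ← HilbertBasis.repr_symm_single]
  rfl

protected noncomputable def equiv (u : HilbertBasis ι 𝕜 E) (v : HilbertBasis ι 𝕜 F) : E ≃ₗᵢ[𝕜] F :=
  u.repr.trans v.repr.symm

@[simp]
lemma equiv_apply_basis (u : HilbertBasis ι 𝕜 E) (v : HilbertBasis ι 𝕜 F) (i : ι) :
    u.equiv v (u i) = v i := by
  classical
  simp [HilbertBasis.equiv, u.repr_self, v.repr_symm_single]

lemma tsum_norm_inner_sq (b : HilbertBasis ι 𝕜 E) (x : E) :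
    ∑' i, ‖⟪b i, x⟫_𝕜‖ ^ 2 = ‖x‖ ^ 2 := by
  have h := (lp.hasSum_norm (p := 2) (by norm_num) (b.repr x)).tsum_eq
  simpa [b.repr.norm_map, b.repr_apply_apply, Real.rpow_two] using h

lemma tsum_norm_inner_apply_sq [CompleteSpace E] [CompleteSpace F] (b : HilbertBasis ι 𝕜 E)
    (T : E →L[𝕜] F) (y : F) : ∑' i, ‖⟪y, T (b i)⟫_𝕜‖ ^ 2 = ‖T.adjoint y‖ ^ 2 := by
  simp_rw [← ContinuousLinearMap.adjoint_inner_left, ← b.tsum_norm_inner_sq (T.adjoint y),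
    norm_inner_symm]

end HilbertBasis

namespace ContinuousLinearMap

variable {𝕜 E : Type*} [RCLike 𝕜] [NormedAddCommGroup E] [InnerProductSpace 𝕜 E]
  [CompleteSpace E]

lemma IsStarNormal.exists_continuousLinearEquiv_of_bound {T : E →L[𝕜] E} (hT : IsStarNormal T)
    {c : ℝ} (hc : 0 < c) (h : ∀ x, c * ‖x‖ ≤ ‖T x‖) :
    ∃ e : E ≃L[𝕜] E, (e : E →L[𝕜] E) = T := by
  have hanti : AntilipschitzWith c⁻¹.toNNReal T := by
    refine T.antilipschitz_of_bound fun x => ?_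
    rw [Real.coe_toNNReal _ (inv_pos.2 hc).le, ← div_eq_inv_mul, le_div_iff₀' hc]
    exact h x
  have hker : T.ker = ⊥ := LinearMap.ker_eq_bot.2 hanti.injective
  have hrange : T.range = ⊤ := by
    have hclosed : IsClosed (T.range : Set E) := hanti.isClosed_range T.uniformContinuous
    rw [← hclosed.submodule_topologicalClosure_eq, ← Submodule.orthogonal_orthogonal_eq_closure,
      IsStarNormal.orthogonal_range hT, hker, Submodule.bot_orthogonal_eq_top]
  exact ⟨.ofBijective T hker hrange, rfl⟩

end ContinuousLinearMap

theorem stmt16_general {H : Type*} [NormedAddCommGroup H] [InnerProductSpace ℂ H] [CompleteSpace H]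
    (f : ℕ → H) (C D : ℝ) (hC : 0 < C)
    (hframe : ∀ v : H, C * ‖v‖ ^ 2 ≤ ∑' j, ‖⟪v, f j⟫_ℂ‖ ^ 2 ∧
      ∑' j, ‖⟪v, f j⟫_ℂ‖ ^ 2 ≤ D * ‖v‖ ^ 2) :
    (∃ (lam mu : ℂ) (u v : HilbertBasis ℕ ℂ H), ∀ j, f j = lam • u j + mu • v j) ↔
      (∃ (T : H ≃L[ℂ] H) (b : HilbertBasis ℕ ℂ H), ∀ j, f j = T (b j)) := by
  constructor
  · rintro ⟨lam, mu, u, v, huv⟩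
    let N : H →L[ℂ] H := lam • 1 + mu • (Unitary.linearIsometryEquiv.symm (u.equiv v) : H →L[ℂ] H)
    have hNu : ∀ j, N (u j) = f j := fun j => by simp [N, huv j]
    have hN : IsStarNormal N :=
      isStarNormal_smul_one_add_smul_of_mem_unitary lam mu (Subtype.property _)
    have hbound : ∀ x, √C * ‖x‖ ≤ ‖N x‖ := fun x => by
      have hlower := (hframe x).1
      simp_rw [← hNu, u.tsum_norm_inner_apply_sq,
        ← ContinuousLinearMap.isStarNormal_iff_norm_eq_adjoint.mp hN] at hlower
      rw [← pow_le_pow_iff_left₀ (by positivity) (norm_nonneg _) two_ne_zero, mul_pow,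
        Real.sq_sqrt hC.le]
      exact hlower
    obtain ⟨T, hT⟩ :=
      ContinuousLinearMap.IsStarNormal.exists_continuousLinearEquiv_of_bound hN
        (Real.sqrt_pos.2 hC) hbound
    exact ⟨T, u, fun j => by rw [← hNu j, ← hT]; rfl⟩
  · rintro ⟨T, b, hfb⟩
    obtain ⟨r, W₁, W₂, hT⟩ := T.toUnit.isUnit.exists_eq_smul_add_unitary
    refine ⟨r, r, b.map (Unitary.linearIsometryEquiv W₁), b.map (Unitary.linearIsometryEquiv W₂),
      fun j => ?_⟩
    rw [hfb, b.map_apply, b.map_apply, Complex.coe_smul, Complex.coe_smul]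
    have h := congr($hT (b j))
    simp only [smul_apply, add_apply, smul_add] at h
    exact h

/-- A frame `{f_j}` of an infinite-dimensional separable Hilbert space `H` (with an orthonormal
basis indexed by `ℕ`) can be written as a fixed linear combination `f_j = λ u_j + μ v_j` of two
orthonormal bases iff `{f_j}` is a Riesz basis (image of an orthonormal basis under a bounded
invertible operator). -/
theorem stmt16 {H : Type*} [NormedAddCommGroup H] [InnerProductSpace ℂ H] [CompleteSpace H]
    (b₀ : HilbertBasis ℕ ℂ H) (f : ℕ → H) (C D : ℝ) (hC : 0 < C)
    (hframe : ∀ v : H, C * ‖v‖ ^ 2 ≤ ∑' j, ‖⟪v, f j⟫_ℂ‖ ^ 2 ∧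
      ∑' j, ‖⟪v, f j⟫_ℂ‖ ^ 2 ≤ D * ‖v‖ ^ 2) :
    (∃ (lam mu : ℂ) (u v : HilbertBasis ℕ ℂ H), ∀ j, f j = lam • u j + mu • v j) ↔
      (∃ (T : H ≃L[ℂ] H) (b : HilbertBasis ℕ ℂ H), ∀ j, f j = T (b j)) :=
  stmt16_general f C D hC hframe
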